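/- For generic nonzero x, z, q with |q|<1, the Appell function satisfies m(x,z;q) = x^{-1} m(x^{-1}, z^{-1}; q). -/

import Mathlib

open Complex

/-- Infinite q-Pochhammer symbol `(x;q)_∞ = ∏_{i≥0} (1 - q^i x)`. -/
noncomputable def qPoch (x q : ℂ) : ℂ := ∏' i : ℕ, (1 - q ^ i * x)

/-- Theta function `j(x;q) = (x;q)_∞ (q/x;q)_∞ (q;q)_∞`. -/
noncomputable def jtheta (x q : ℂ) : ℂ := qPoch x q * qPoch (q / x) q * qPoch q q

/-- Appell function `m(x,z;q) = j(z;q)⁻¹ ∑_{r∈ℤ} (-1)^r q^{r(r-1)/2} z^r / (1-q^{r-1}xz)`. -/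
noncomputable def appell (x z q : ℂ) : ℂ :=
  (jtheta z q)⁻¹
    * ∑' r : ℤ, (-1 : ℂ) ^ r * q ^ (r * (r - 1) / 2) * z ^ r / (1 - q ^ (r - 1) * x * z)

/-!
Reindexing `r ↦ 2 - r` turns the summand of `m(x⁻¹, z⁻¹; q)` into `-x z⁻¹` times the summand of
`m(x, z; q)`, while peeling off the first factor of each q-Pochhammer symbol gives
`j(z⁻¹; q) = -z⁻¹ j(z; q)`; the two factors `-z⁻¹` and `-x z⁻¹` combine to the `x⁻¹` of the
identity.
-/

lemma multipliable_one_sub_pow_mul {q : ℂ} (x : ℂ) (hq : ‖q‖ < 1) :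
    Multipliable fun i : ℕ ↦ 1 - q ^ i * x := by
  simpa [sub_eq_add_neg] using multipliable_one_add_of_summable (f := fun i : ℕ ↦ -(q ^ i * x))
    (by simpa using (summable_geometric_of_lt_one (norm_nonneg q) hq).mul_right ‖x‖)

lemma qPoch_eq_one_sub_mul {q : ℂ} (x : ℂ) (hq : ‖q‖ < 1) :
    qPoch x q = (1 - x) * qPoch (q * x) q := by
  have hshift : Multipliable fun i : ℕ ↦ 1 - q ^ (i + 1) * x := by
    convert multipliable_one_sub_pow_mul (q * x) hq using 2 with i
    ring
  rw [qPoch, qPoch, tprod_eq_zero_mul' (f := fun i ↦ 1 - q ^ i * x) hshift, pow_zero, one_mul]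
  simp only [pow_succ, mul_assoc]

lemma jtheta_inv {q z : ℂ} (hq : ‖q‖ < 1) (hz : z ≠ 0) :
    jtheta z⁻¹ q = -z⁻¹ * jtheta z q := by
  rw [jtheta, jtheta, qPoch_eq_one_sub_mul z⁻¹ hq, qPoch_eq_one_sub_mul z hq, div_inv_eq_mul,
    div_eq_mul_inv]
  field_simp
  ring

noncomputable def appellSummand (x z q : ℂ) (r : ℤ) : ℂ :=
  (-1 : ℂ) ^ r * q ^ (r * (r - 1) / 2) * z ^ r / (1 - q ^ (r - 1) * x * z)

lemma appell_eq_tsum_appellSummand (x z q : ℂ) :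
    appell x z q = (jtheta z q)⁻¹ * ∑' r, appellSummand x z q r :=
  rfl

lemma neg_one_zpow_two_sub {α : Type*} [DivisionRing α] (r : ℤ) :
    (-1 : α) ^ (2 - r) = (-1) ^ r := by
  rw [show 2 - r = r + 2 * (1 - r) by ring, zpow_add₀ (by norm_num), zpow_mul]
  norm_num

lemma appellSummand_inv_inv {q x z : ℂ} (hq0 : q ≠ 0) (hx : x ≠ 0) (hz : z ≠ 0) (r : ℤ) :
    appellSummand x⁻¹ z⁻¹ q r = -(x * z⁻¹) * appellSummand x z q (2 - r) := by
  -- The denominators differ by the nonzero factor `-q^(1-r) x z`, so the identity also holds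
  -- where they vanish and both sides are `0` by the convention `a / 0 = 0`.
  have hexp : (2 - r) * (2 - r - 1) / 2 = r * (r - 1) / 2 + (1 - r) := by
    rw [show (2 - r) * (2 - r - 1) = r * (r - 1) + (1 - r) * 2 by ring,
      Int.add_mul_ediv_right _ _ two_ne_zero]
  have hu : q ^ (r - 1) ≠ 0 := zpow_ne_zero _ hq0
  have hq_neg : q ^ (1 - r) = (q ^ (r - 1))⁻¹ := by rw [← zpow_neg, neg_sub]
  have hden :
      1 - q ^ (1 - r) * x * z = -(q ^ (1 - r) * x * z) * (1 - q ^ (r - 1) * x⁻¹ * z⁻¹) := by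
    rw [hq_neg]
    field_simp
    ring
  rw [appellSummand, appellSummand, neg_one_zpow_two_sub, hexp, show 2 - r - 1 = 1 - r by ring,
    hden, zpow_add₀ hq0, show 2 - r = 2 + -r by ring, zpow_add₀ hz, zpow_neg, inv_zpow, hq_neg]
  field_simp

lemma tsum_appellSummand_inv_inv {q x z : ℂ} (hq0 : q ≠ 0) (hx : x ≠ 0) (hz : z ≠ 0) :
    ∑' r, appellSummand x⁻¹ z⁻¹ q r = -(x * z⁻¹) * ∑' r, appellSummand x z q r := by
  rw [← tsum_mul_left,
    ← (Equiv.subLeft (2 : ℤ)).tsum_eq fun r ↦ -(x * z⁻¹) * appellSummand x z q r]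
  exact tsum_congr (appellSummand_inv_inv hq0 hx hz)

theorem appell_flip_general (q x z : ℂ) (hq : ‖q‖ < 1)
    (hq0 : q ≠ 0) (hx : x ≠ 0) (hz : z ≠ 0) :
    appell x z q = x⁻¹ * appell x⁻¹ z⁻¹ q := by
  rw [appell_eq_tsum_appellSummand, appell_eq_tsum_appellSummand, jtheta_inv hq hz,
    tsum_appellSummand_inv_inv hq0 hx hz]
  field_simp

theorem appell_flip (q x z : ℂ) (hq : ‖q‖ < 1)
    (hq0 : q ≠ 0) (hx : x ≠ 0) (hz : z ≠ 0)
    (hden : ∀ r : ℤ, 1 - q ^ (r - 1) * x * z ≠ 0)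
    (hden' : ∀ r : ℤ, 1 - q ^ (r - 1) * x⁻¹ * z⁻¹ ≠ 0)
    (hj : jtheta z q ≠ 0) (hj' : jtheta z⁻¹ q ≠ 0) :
    appell x z q = x⁻¹ * appell x⁻¹ z⁻¹ q :=
  appell_flip_general q x z hq hq0 hx hz
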